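/- Let k > 0 and define the quadratic polynomial y(t) = k + (k−3)·t + ((k−3)/(2k))·t². Then the residual function F(t) = −(y'(t)·t − y(t))·(y(t) − k·t − k + 4t) + y(t)·(y(t) − k·t − k + 2t) vanishes to third order at t = 0: its value and its first and second derivatives at t = 0 are all zero, so that F(t)/t³ is bounded as t → 0⁺. In other words, the coefficients C₀ = k, C₁ = k−3, C₂ = (k−3)/(2k) solve the reparametrized mode equation through order t². -/

import Mathlib

/-!
Because `y` is a polynomial, `F` is one as well, and clearing the denominator `2k` shows that the
coefficients of `1`, `t` and `t²` cancel, leaving `F(t) = (k - 3)(k - 5)/(2k) · t³`. All three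
claims are then read off this cubic monomial.
-/

/-- The quadratic approximation `y(t) = C₀ + C₁ t + C₂ t²` with
`C₀ = k`, `C₁ = k - 3`, `C₂ = (k - 3)/(2k)`. -/
noncomputable def yApprox (k : ℝ) : ℝ → ℝ :=
  fun t => k + (k - 3) * t + (k - 3) / (2 * k) * t ^ 2

/-- The residual of the reparametrized mode equation for `yApprox k`. -/
noncomputable def resF (k : ℝ) : ℝ → ℝ :=
  fun t =>
    -(deriv (yApprox k) t * t - yApprox k t) * (yApprox k t - k * t - k + 4 * t) +
      yApprox k t * (yApprox k t - k * t - k + 2 * t)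

theorem deriv_const_mul_pow_succ {𝕜 : Type*} [NontriviallyNormedField 𝕜] (c : 𝕜) (n : ℕ) :
    deriv (fun t : 𝕜 => c * t ^ (n + 1)) = fun t => (n + 1) * c * t ^ n := by
  funext t
  simp only [deriv_const_mul_field', deriv_pow_field, Nat.add_sub_cancel]
  push_cast
  ring

theorem hasDerivAt_yApprox (k t : ℝ) :
    HasDerivAt (yApprox k) ((k - 3) + (k - 3) / (2 * k) * (2 * t)) t := by
  have h : HasDerivAt (yApprox k) ((k - 3) * 1 + (k - 3) / (2 * k) * (↑2 * t ^ (2 - 1))) t :=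
    (((hasDerivAt_id' t).const_mul (k - 3)).const_add k).add
      ((hasDerivAt_pow 2 t).const_mul ((k - 3) / (2 * k)))
  convert h using 1
  norm_num

theorem resF_eq_cube {k : ℝ} (hk : k ≠ 0) :
    resF k = fun t => (k - 3) * (k - 5) / (2 * k) * t ^ 3 := by
  funext t
  simp only [resF, (hasDerivAt_yApprox k t).deriv, yApprox]
  field_simp
  ring

theorem stmt_5 (k : ℝ) (hk : 0 < k) :
    resF k 0 = 0 ∧ deriv (resF k) 0 = 0 ∧ deriv (deriv (resF k)) 0 = 0 ∧
      ∃ C : ℝ, ∀ᶠ t in nhdsWithin (0 : ℝ) (Set.Ioi 0), |resF k t / t ^ 3| ≤ C := by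
  set c := (k - 3) * (k - 5) / (2 * k)
  have hF : resF k = fun t => c * t ^ 3 := resF_eq_cube hk.ne'
  have hF' : deriv (resF k) = fun t => 3 * c * t ^ 2 := by
    rw [hF, deriv_const_mul_pow_succ c 2]; norm_num
  have hF'' : deriv (deriv (resF k)) = fun t => 6 * c * t := by
    rw [hF', deriv_const_mul_pow_succ _ 1]; norm_num [← mul_assoc]
  refine ⟨by simp [hF], by simp [hF'], by simp [hF''], |c|, ?_⟩
  filter_upwards [self_mem_nhdsWithin] with t ht
  rw [hF, mul_div_cancel_right₀ c (pow_ne_zero 3 (Set.mem_Ioi.mp ht).ne')]
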